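/- For every real x > 0, the Mills ratio bound holds: 2/(x + √(4 + x²)) < (1 − Φ(x))/φ(x), where φ and Φ are the standard normal density and distribution function. Equivalently, 1/(1 − Φ(x)) < (x + √(4 + x²))/(2φ(x)). -/

import Mathlib

open Real MeasureTheory Set Filter Topology

noncomputable def stdNormalPdf (x : ℝ) : ℝ :=
  (Real.sqrt (2 * Real.pi))⁻¹ * Real.exp (-x ^ 2 / 2)

noncomputable def stdNormalCdf (x : ℝ) : ℝ :=
  ∫ t in Set.Iic x, stdNormalPdf t

lemma stdNormalPdf_pos (t : ℝ) : 0 < stdNormalPdf t := by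
  unfold stdNormalPdf
  positivity

lemma stdNormalPdf_hasDerivAt (t : ℝ) :
    HasDerivAt stdNormalPdf (-t * stdNormalPdf t) t := by
  have h1 : HasDerivAt (fun u : ℝ => -u ^ 2 / 2) (-t) t := by
    have := (hasDerivAt_pow 2 t).neg.div_const 2
    refine this.congr_deriv ?_
    ring
  have h2 := (h1.exp).const_mul (Real.sqrt (2 * Real.pi))⁻¹
  refine h2.congr_deriv ?_
  unfold stdNormalPdf
  ring

lemma stdNormalPdf_eq (t : ℝ) :
    stdNormalPdf t = (Real.sqrt (2 * Real.pi))⁻¹ * Real.exp (-(1/2) * t ^ 2) := by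
  unfold stdNormalPdf
  ring_nf

lemma stdNormalPdf_integrable : Integrable stdNormalPdf := by
  have h : Integrable (fun t : ℝ => Real.exp (-(1/2) * t ^ 2)) :=
    integrable_exp_neg_mul_sq (by norm_num)
  have := h.const_mul (Real.sqrt (2 * Real.pi))⁻¹
  refine this.congr ?_
  filter_upwards with t
  rw [stdNormalPdf_eq]

lemma stdNormalPdf_integral : ∫ t, stdNormalPdf t = 1 := by
  have h : ∫ t : ℝ, Real.exp (-(1/2) * t ^ 2) = Real.sqrt (π / (1/2)) :=
    integral_gaussian (1/2)
  have h2 : ∫ t, stdNormalPdf t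
      = (Real.sqrt (2 * Real.pi))⁻¹ * ∫ t : ℝ, Real.exp (-(1/2) * t ^ 2) := by
    rw [← integral_const_mul]
    congr 1
    ext t
    rw [stdNormalPdf_eq]
  rw [h2, h]
  have : π / (1/2) = 2 * π := by ring
  rw [this]
  have hpos : (0:ℝ) < Real.sqrt (2 * π) := Real.sqrt_pos.mpr (by positivity)
  field_simp

lemma stdNormalPdf_tendsto : Tendsto stdNormalPdf atTop (𝓝 0) := by
  have h1 : Tendsto (fun t : ℝ => -t ^ 2 / 2) atTop atBot := by
    apply Filter.Tendsto.atBot_div_const (by norm_num)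
    exact tendsto_neg_atBot_iff.mpr (tendsto_pow_atTop (by norm_num))
  have h2 := Real.tendsto_exp_atBot.comp h1
  have h3 := h2.const_mul (Real.sqrt (2 * Real.pi))⁻¹
  have : (Real.sqrt (2 * Real.pi))⁻¹ * (0:ℝ) = 0 := by ring
  rw [← this]
  exact h3.congr (fun t => by simp [stdNormalPdf, Function.comp])

noncomputable def millsG (t : ℝ) : ℝ :=
  stdNormalPdf t * ((Real.sqrt (4 + t ^ 2) - t) / 2)

noncomputable def millsG' (t : ℝ) : ℝ :=
  stdNormalPdf t * ((t / Real.sqrt (4 + t ^ 2) - 1) / 2)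
    + (-t * stdNormalPdf t) * ((Real.sqrt (4 + t ^ 2) - t) / 2)

lemma sqrt_sq_eq (t : ℝ) : Real.sqrt (4 + t ^ 2) ^ 2 = 4 + t ^ 2 :=
  Real.sq_sqrt (by positivity)

lemma sqrt_pos' (t : ℝ) : 0 < Real.sqrt (4 + t ^ 2) :=
  Real.sqrt_pos.mpr (by positivity)

lemma sqrt_hasDerivAt (t : ℝ) :
    HasDerivAt (fun u : ℝ => Real.sqrt (4 + u ^ 2)) (t / Real.sqrt (4 + t ^ 2)) t := by
  have h1 : HasDerivAt (fun u : ℝ => 4 + u ^ 2) (2 * t) t := by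
    simpa using (hasDerivAt_pow 2 t).const_add 4
  have h2 := (Real.hasDerivAt_sqrt (by positivity : (4:ℝ) + t ^ 2 ≠ 0)).comp t h1
  refine h2.congr_deriv ?_
  field_simp

lemma millsG_hasDerivAt (t : ℝ) : HasDerivAt millsG (millsG' t) t := by
  have h1 : HasDerivAt (fun u : ℝ => (Real.sqrt (4 + u ^ 2) - u) / 2)
      ((t / Real.sqrt (4 + t ^ 2) - 1) / 2) t :=
    ((sqrt_hasDerivAt t).sub (hasDerivAt_id t)).div_const 2
  have h2 := (stdNormalPdf_hasDerivAt t).mul h1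
  refine h2.congr_deriv ?_
  unfold millsG'
  ring

lemma millsG_key (t : ℝ) (ht : 0 < t) : 0 < stdNormalPdf t + millsG' t := by
  set s := Real.sqrt (4 + t ^ 2) with hs
  have hs2 : s ^ 2 = 4 + t ^ 2 := sqrt_sq_eq t
  have hsp : 0 < s := sqrt_pos' t
  have hφ : 0 < stdNormalPdf t := stdNormalPdf_pos t
  -- key polynomial inequality : t * (3 + t^2) < s * (1 + t^2)
  have hkey : t * (3 + t ^ 2) < s * (1 + t ^ 2) := by
    have h0 : 0 ≤ s * (1 + t ^ 2) := by positivity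
    refine lt_of_pow_lt_pow_left₀ 2 h0 ?_
    have : (s * (1 + t ^ 2)) ^ 2 = (4 + t ^ 2) * (1 + t ^ 2) ^ 2 := by
      rw [mul_pow, hs2]
    nlinarith [this]
  have hpos : 0 < 1 + t / s + t ^ 2 - t * s := by
    have hmul : s * (1 + t / s + t ^ 2 - t * s)
        = s * (1 + t ^ 2) - t * (3 + t ^ 2) := by
      field_simp
      nlinarith [hs2]
    have h1 : 0 < s * (1 + t / s + t ^ 2 - t * s) := by
      rw [hmul]; linarith
    nlinarith [h1, hsp]
  have heq : stdNormalPdf t + millsG' t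
      = stdNormalPdf t * ((1 + t / s + t ^ 2 - t * s) / 2) := by
    unfold millsG'
    rw [← hs]
    ring
  rw [heq]
  positivity

lemma millsG'_integrableOn (x : ℝ) (hx : 0 < x) :
    IntegrableOn millsG' (Set.Ioi x) := by
  have hcont : Continuous millsG' := by
    unfold millsG'
    have hc1 : Continuous fun t : ℝ => Real.sqrt (4 + t ^ 2) :=
      (continuous_const.add (continuous_pow 2)).sqrt
    have hc2 : Continuous stdNormalPdf := by
      unfold stdNormalPdf
      fun_prop
    have hne : ∀ t : ℝ, Real.sqrt (4 + t ^ 2) ≠ 0 := fun t => (sqrt_pos' t).ne'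
    fun_prop (disch := exact hne)
  refine (stdNormalPdf_integrable.restrict.const_mul 2).mono
    (hcont.aestronglyMeasurable.restrict) ?_
  filter_upwards [ae_restrict_mem measurableSet_Ioi] with t ht
  have ht' : (0:ℝ) < t := lt_trans hx ht
  set s := Real.sqrt (4 + t ^ 2) with hs
  have hs2 : s ^ 2 = 4 + t ^ 2 := sqrt_sq_eq t
  have hsp : 0 < s := sqrt_pos' t
  have hφ : 0 < stdNormalPdf t := stdNormalPdf_pos t
  have hts : t < s := by nlinarith
  have h1 : 0 < t / s := by positivity
  have h2 : t / s < 1 := (div_lt_one hsp).mpr hts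
  have h3 : 0 < t * ((s - t) / 2) := by nlinarith
  have h4 : t * ((s - t) / 2) < 1 := by
    have : t * (s - t) < 2 := by
      have hst : s < t + 2 / t := by
        have h0 : 0 ≤ t + 2 / t := by positivity
        refine lt_of_pow_lt_pow_left₀ 2 h0 ?_
        rw [hs2]
        have : (t + 2 / t) ^ 2 = t ^ 2 + 4 + 4 / t ^ 2 := by
          field_simp; ring
        rw [this]
        have : 0 < 4 / t ^ 2 := by positivity
        linarith
      calc t * (s - t) < t * (t + 2 / t - t) := by
            apply mul_lt_mul_of_pos_left _ ht'
            linarith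
        _ = 2 := by field_simp; ring
    linarith
  have habs : |millsG' t| ≤ 2 * stdNormalPdf t := by
    unfold millsG'
    rw [← hs]
    rw [abs_le]
    constructor <;> nlinarith
  calc ‖millsG' t‖ = |millsG' t| := rfl
    _ ≤ 2 * stdNormalPdf t := habs
    _ ≤ ‖2 * stdNormalPdf t‖ := le_abs_self _

lemma millsG_tendsto : Tendsto millsG atTop (𝓝 0) := by
  have hb : ∀ᶠ t in atTop, ‖millsG t‖ ≤ stdNormalPdf t := by
    filter_upwards [eventually_gt_atTop (0:ℝ)] with t ht
    have hsp : 0 < Real.sqrt (4 + t ^ 2) := sqrt_pos' t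
    have hs2 : Real.sqrt (4 + t ^ 2) ^ 2 = 4 + t ^ 2 := sqrt_sq_eq t
    have hφ : 0 < stdNormalPdf t := stdNormalPdf_pos t
    have hst : Real.sqrt (4 + t ^ 2) < t + 2 := by
      have h0 : 0 ≤ t + 2 := by linarith
      refine lt_of_pow_lt_pow_left₀ 2 h0 ?_
      rw [hs2]; nlinarith
    have hts : t < Real.sqrt (4 + t ^ 2) := by nlinarith
    have h1 : 0 < (Real.sqrt (4 + t ^ 2) - t) / 2 := by linarith
    have h2 : (Real.sqrt (4 + t ^ 2) - t) / 2 < 1 := by linarith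
    unfold millsG
    rw [Real.norm_eq_abs, abs_of_pos (by positivity)]
    nlinarith
  have hb2 : ∀ᶠ t in atTop, ‖millsG t‖ ≤ ‖stdNormalPdf t‖ := by
    filter_upwards [hb] with t ht
    exact ht.trans (le_abs_self _)
  exact squeeze_zero_norm' hb2 (by simpa using stdNormalPdf_tendsto.norm)

lemma tail_integral (x : ℝ) :
    ∫ t in Set.Ioi x, stdNormalPdf t = 1 - stdNormalCdf x := by
  have h := intervalIntegral.integral_Iic_add_Ioi (f := stdNormalPdf) (b := x) (μ := volume)
    stdNormalPdf_integrable.integrableOn stdNormalPdf_integrable.integrableOn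
  rw [stdNormalPdf_integral] at h
  unfold stdNormalCdf
  linarith

lemma tail_gt (x : ℝ) (hx : 0 < x) :
    stdNormalPdf x * ((Real.sqrt (4 + x ^ 2) - x) / 2) < 1 - stdNormalCdf x := by
  have hftc : ∫ t in Set.Ioi x, millsG' t = 0 - millsG x := by
    refine integral_Ioi_of_hasDerivAt_of_tendsto
      (millsG_hasDerivAt x).continuousAt.continuousWithinAt
      (fun t _ => millsG_hasDerivAt t) (millsG'_integrableOn x hx) millsG_tendsto
  have hint : IntegrableOn (fun t => stdNormalPdf t + millsG' t) (Set.Ioi x) :=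
    stdNormalPdf_integrable.integrableOn.add (millsG'_integrableOn x hx)
  have hpos : 0 < ∫ t in Set.Ioi x, (stdNormalPdf t + millsG' t) := by
    rw [setIntegral_pos_iff_support_of_nonneg_ae]
    · have hsub : Set.Ioi x ⊆ Function.support (fun t => stdNormalPdf t + millsG' t)
        ∩ Set.Ioi x := by
        intro t ht
        refine ⟨?_, ht⟩
        exact (millsG_key t (lt_trans hx ht)).ne'
      calc (0:ENNReal) < volume (Set.Ioi x) := by simp
        _ ≤ _ := measure_mono hsub
    · filter_upwards [ae_restrict_mem measurableSet_Ioi] with t ht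
      exact (millsG_key t (lt_trans hx ht)).le
    · exact hint
  rw [integral_add stdNormalPdf_integrable.integrableOn (millsG'_integrableOn x hx),
    hftc, tail_integral] at hpos
  unfold millsG at hpos
  linarith

theorem birnbaum_mills_bound (x : ℝ) (hx : 0 < x) :
    2 / (x + Real.sqrt (4 + x ^ 2)) < (1 - stdNormalCdf x) / stdNormalPdf x ∧
    1 / (1 - stdNormalCdf x) < (x + Real.sqrt (4 + x ^ 2)) / (2 * stdNormalPdf x) := by
  have hφ : 0 < stdNormalPdf x := stdNormalPdf_pos x
  have hsp : 0 < Real.sqrt (4 + x ^ 2) := sqrt_pos' x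
  have hs2 : Real.sqrt (4 + x ^ 2) ^ 2 = 4 + x ^ 2 := sqrt_sq_eq x
  set s := Real.sqrt (4 + x ^ 2)
  have hxs : 0 < x + s := by linarith
  have hT := tail_gt x hx
  have hTpos : 0 < 1 - stdNormalCdf x := lt_trans (mul_pos hφ (by nlinarith)) hT
  have hm : (s - x) / 2 = 2 / (x + s) := by
    rw [eq_div_iff hxs.ne']
    nlinarith
  constructor
  · rw [lt_div_iff₀ hφ, ← hm]
    nlinarith
  · rw [div_lt_div_iff₀ hTpos (by positivity), one_mul]
    nlinarith [hT, mul_pos hφ hxs]
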